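/- arXiv:2205.06954 — 2 statements merged into one kernel-verified Lean document; each statement's English description precedes it below -/
import Mathlib

section
/- Let σ ≥ 1 be an integer. For every ε > 0, ε · ∫_{[1,∞)^σ} (t₁ + t₂ + ⋯ + t_σ)^{-σ-ε} dt₁⋯dt_σ = σ^{-ε} / ∏_{k=1}^{σ-1} (k + ε). Consequently, lim_{ε→0⁺} ε · ∫_{[1,∞)^σ} (t₁ + ⋯ + t_σ)^{-σ-ε} dt = 1/(σ−1)!. -/
/-!
Integrate out one coordinate at a time: since `∫_1^∞ (c + x)^{-s} dx = (c + 1)^{1-s} / (s - 1)`,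
each integration lowers the exponent by one and contributes a factor `1 / (s - k)`, so
`∫_{[1,∞)^n} (∑ tᵢ)^{-s} dt = n^{n-s} / ∏_{k=1}^{n} (s - k)`. Working with lower Lebesgue
integrals makes Tonelli available without integrability side conditions. At `s = σ + ε` the
factors are `ε, 1 + ε, …, σ - 1 + ε`, and the limit follows from continuity of the closed form
at `ε = 0`.
-/

open MeasureTheory Real Set Filter

theorem Finset.prod_range_succ_eq_mul_prod_Icc {M : Type*} [CommMonoid M] (f : ℕ → M) (m : ℕ) :
    ∏ k ∈ Finset.range (m + 1), f k = f 0 * ∏ k ∈ Finset.Icc 1 m, f k := by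
  rw [Finset.prod_range_eq_mul_Ico f (by omega : 0 < m + 1), Finset.Ico_add_one_right_eq_Icc]

theorem prod_range_natCast_add_sub_succ (n : ℕ) (ε : ℝ) :
    ∏ k ∈ Finset.range n, ((n : ℝ) + ε - (k + 1)) = ∏ k ∈ Finset.range n, ((k : ℝ) + ε) := by
  rw [← Finset.prod_range_reflect]
  refine Finset.prod_congr rfl fun k hk => ?_
  rw [Finset.mem_range] at hk
  rw [Nat.cast_sub (by omega), Nat.cast_sub (by omega)]
  push_cast
  ring

theorem prod_range_sub_succ_pos {n : ℕ} {s : ℝ} (hs : n < s) :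
    0 < ∏ k ∈ Finset.range n, (s - (k + 1)) :=
  Finset.prod_pos fun k hk => by
    have : (k : ℝ) + 1 ≤ n := by exact_mod_cast Finset.mem_range.1 hk
    linarith

theorem lintegral_pi_fin_succ {α : Type*} [MeasurableSpace α] (μ : Measure α) [SigmaFinite μ]
    {n : ℕ} {f : (Fin (n + 1) → α) → ENNReal} (hf : Measurable f) :
    ∫⁻ t, f t ∂(Measure.pi fun _ => μ)
      = ∫⁻ x, ∫⁻ y, f (Fin.cons x y) ∂(Measure.pi fun _ => μ) ∂μ := by
  rw [← ((measurePreserving_piFinSuccAbove (fun _ => μ) 0).symm).lintegral_comp_emb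
    (MeasurableEquiv.measurableEmbedding _), lintegral_prod]
  · simp only [MeasurableEquiv.piFinSuccAbove_symm_apply, Fin.insertNthEquiv, Fin.insertNth_zero']
    rfl
  · exact (hf.comp (MeasurableEquiv.measurable _)).aemeasurable

theorem lintegral_Ici_one_ofReal_add_rpow {c p : ℝ} (hc : 0 < c + 1) (hp : p < -1) :
    ∫⁻ x in Ici 1, ENNReal.ofReal ((c + x) ^ p)
      = ENNReal.ofReal (-(c + 1) ^ (p + 1) / (p + 1)) := by
  calc ∫⁻ x in Ici 1, ENNReal.ofReal ((c + x) ^ p)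
      = ∫⁻ x in (c + ·) ⁻¹' Ici (c + 1), ENNReal.ofReal ((c + x) ^ p) := by
        rw [preimage_const_add_Ici, add_sub_cancel_left]
    _ = ∫⁻ y in Ioi (c + 1), ENNReal.ofReal (y ^ p) := by
        rw [restrict_Ioi_eq_restrict_Ici]
        exact (measurePreserving_add_left volume c).setLIntegral_comp_preimage_emb
          (measurableEmbedding_addLeft c) (fun y => ENNReal.ofReal (y ^ p)) _
    _ = ENNReal.ofReal (∫ y in Ioi (c + 1), y ^ p) :=
        (ofReal_integral_eq_lintegral_ofReal (integrableOn_Ioi_rpow_of_lt hp hc)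
          (ae_restrict_of_forall_mem measurableSet_Ioi fun y hy =>
            rpow_nonneg (hc.trans hy).le p)).symm
    _ = _ := by rw [integral_Ioi_rpow_of_lt hp hc]

theorem lintegral_pi_Ici_one_ofReal_rpow_add_sum {s : ℝ} {n : ℕ} (hs : n < s) {a : ℝ}
    (ha : 0 ≤ a) :
    ∫⁻ t, ENNReal.ofReal ((a + ∑ i, t i) ^ (-s))
        ∂(Measure.pi fun _ : Fin n => volume.restrict (Ici (1 : ℝ)))
      = ENNReal.ofReal ((a + n) ^ (n - s) / ∏ k ∈ Finset.range n, (s - (k + 1))) := by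
  induction n generalizing a with
  | zero => simp
  | succ n ih =>
    push_cast at hs
    set P := ∏ k ∈ Finset.range n, (s - (k + 1))
    have hP : 0 < P := prod_range_sub_succ_pos (by linarith)
    have inner : ∀ x ∈ Ici (1 : ℝ),
        ∫⁻ y, ENNReal.ofReal ((a + ∑ i, (Fin.cons x y : Fin (n + 1) → ℝ) i) ^ (-s))
          ∂(Measure.pi fun _ : Fin n => volume.restrict (Ici (1 : ℝ)))
        = ENNReal.ofReal ((a + n + x) ^ (n - s)) * ENNReal.ofReal P⁻¹ := by
      intro x hx
      simp only [Fin.sum_cons, ← add_assoc]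
      rw [ih (by linarith) (by linarith [mem_Ici.1 hx]), add_right_comm, div_eq_mul_inv,
        ENNReal.ofReal_mul (rpow_nonneg (by linarith [mem_Ici.1 hx]) _)]
    rw [lintegral_pi_fin_succ _ (by fun_prop), setLIntegral_congr_fun measurableSet_Ici inner,
      lintegral_mul_const _ (by fun_prop),
      lintegral_Ici_one_ofReal_add_rpow (by positivity) (by linarith), ← ENNReal.ofReal_mul]
    · congr 1
      have hsn : (n : ℝ) - s + 1 ≠ 0 := by linarith
      have hsn' : s - (n + 1) ≠ 0 := by linarith
      rw [Finset.prod_range_succ]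
      push_cast
      rw [show a + (n + 1) = a + n + 1 by ring, show (n : ℝ) + 1 - s = n - s + 1 by ring]
      change _ = _ / (P * _)
      field_simp
      ring
    · exact div_nonneg_of_nonpos (neg_nonpos.2 (rpow_nonneg (by positivity) _)) (by linarith)

theorem setIntegral_univ_pi_Ici_one_rpow_sum {n : ℕ} {s : ℝ} (hs : n < s) :
    ∫ t in univ.pi (fun _ : Fin n => Ici (1 : ℝ)), (∑ i, t i) ^ (-s)
      = (n : ℝ) ^ (n - s) / ∏ k ∈ Finset.range n, (s - (k + 1)) := by
  rw [integral_eq_lintegral_of_nonneg_ae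
      (ae_restrict_of_forall_mem (MeasurableSet.univ_pi fun _ => measurableSet_Ici) fun t ht =>
        rpow_nonneg (Finset.sum_nonneg fun i _ => zero_le_one.trans (ht i trivial)) _)
      ((Measurable.pow_const (by fun_prop) _).aestronglyMeasurable),
    volume_pi, Measure.restrict_pi_pi]
  have h := lintegral_pi_Ici_one_ofReal_rpow_add_sum hs (le_refl 0)
  simp only [zero_add] at h
  rw [h, ENNReal.toReal_ofReal
    (div_nonneg (rpow_nonneg n.cast_nonneg _) (prod_range_sub_succ_pos hs).le)]

theorem mul_setIntegral_univ_pi_Ici_one_rpow_sum (m : ℕ) {ε : ℝ} (hε : 0 < ε) :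
    ε * ∫ t in univ.pi (fun _ : Fin (m + 1) => Ici (1 : ℝ)),
        (∑ i, t i) ^ (-((m + 1 : ℕ) : ℝ) - ε)
      = ((m + 1 : ℕ) : ℝ) ^ (-ε) / ∏ k ∈ Finset.Icc 1 m, ((k : ℝ) + ε) := by
  have hprod : 0 < ∏ k ∈ Finset.Icc 1 m, ((k : ℝ) + ε) :=
    Finset.prod_pos fun k _ => by positivity
  rw [← neg_add', setIntegral_univ_pi_Ici_one_rpow_sum (by linarith), sub_add_cancel_left,
    prod_range_natCast_add_sub_succ, Finset.prod_range_succ_eq_mul_prod_Icc, Nat.cast_zero,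
    zero_add]
  field_simp

theorem prod_Icc_one_natCast_add_zero_eq_factorial (m : ℕ) :
    ∏ k ∈ Finset.Icc 1 m, ((k : ℝ) + 0) = (m.factorial : ℝ) := by
  simp only [add_zero, ← Finset.Ico_add_one_right_eq_Icc]
  rw [← Nat.cast_prod, Finset.prod_Ico_id_eq_factorial]

/-- For σ ≥ 1 and ε > 0,
ε · ∫_{[1,∞)^σ} (t₁ + ⋯ + t_σ)^{-σ-ε} dt = σ^{-ε} / ∏_{k=1}^{σ-1} (k + ε),
and consequently the limit as ε → 0⁺ of ε times the integral is 1/(σ−1)!. -/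
theorem stmt_2 (σ : ℕ) (hσ : 1 ≤ σ) :
    (∀ ε : ℝ, 0 < ε →
      ε * ∫ t in Set.univ.pi (fun _ : Fin σ => Set.Ici (1:ℝ)),
          (∑ i, t i) ^ (-(σ:ℝ) - ε)
        = (σ:ℝ) ^ (-ε) / ∏ k ∈ Finset.Icc 1 (σ - 1), ((k:ℝ) + ε)) ∧
    Filter.Tendsto
      (fun ε : ℝ => ε * ∫ t in Set.univ.pi (fun _ : Fin σ => Set.Ici (1:ℝ)),
          (∑ i, t i) ^ (-(σ:ℝ) - ε))
      (nhdsWithin 0 (Set.Ioi 0))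
      (nhds (1 / (Nat.factorial (σ - 1) : ℝ))) := by
  obtain ⟨m, rfl⟩ := Nat.exists_eq_add_of_le' hσ
  simp only [Nat.add_sub_cancel]
  refine ⟨fun ε hε => mul_setIntegral_univ_pi_Ici_one_rpow_sum m hε, ?_⟩
  have hcont : ContinuousAt
      (fun ε : ℝ => ((m + 1 : ℕ) : ℝ) ^ (-ε) / ∏ k ∈ Finset.Icc 1 m, ((k : ℝ) + ε)) 0 :=
    ((continuousAt_const_rpow (by positivity)).comp continuousAt_neg).div (by fun_prop)
      (by rw [prod_Icc_one_natCast_add_zero_eq_factorial]; positivity)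
  have hlim := hcont.tendsto.mono_left (nhdsWithin_le_nhds (s := Ioi 0))
  rw [neg_zero, rpow_zero, prod_Icc_one_natCast_add_zero_eq_factorial] at hlim
  exact hlim.congr' (eventually_nhdsWithin_of_forall fun ε hε =>
    (mul_setIntegral_univ_pi_Ici_one_rpow_sum m hε).symm)
end

section
/- Let h: [1,∞)² → ℝ be a bounded measurable function such that h(t₁,t₂) → L as min(t₁,t₂) → ∞. Then lim_{ε→0⁺} ε · ∫_{[1,∞)²} h(t₁,t₂) · (t₁ + t₂)^{-2-ε} dt₁ dt₂ = L. -/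
/-!
For every `a > 0` the weights `ε (t₁ + t₂)^(-2-ε)` have total mass `(2a)^(-ε) / (1 + ε)` on
`[a, ∞)²` (Fubini and two one-variable power integrals), which tends to `1` as `ε → 0⁺`.
Comparing `a = 1` with `a = T` shows that the mass of `[1, ∞)² \ [T, ∞)²` tends to `0`, so the
weights form an approximate identity concentrating where `min t₁ t₂ ≥ T`. There `h` is within
`δ` of `L`, while on the rest the bound `|h| ≤ C` makes the contribution vanish in the limit.
-/

open MeasureTheory Real Set Filter Topology

section Concentration

variable {ι α : Type*} [MeasurableSpace α] {μ : Measure α}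

lemma abs_setIntegral_mul_le_of_abs_le {f w : α → ℝ} {S G : Set α} {K δ : ℝ}
    (hS : MeasurableSet S) (hG : MeasurableSet G) (hδ : 0 ≤ δ) (hw0 : ∀ x ∈ S, 0 ≤ w x)
    (hw : IntegrableOn w S μ) (hfK : ∀ x ∈ S, |f x| ≤ K) (hfδ : ∀ x ∈ G, |f x| ≤ δ) :
    |∫ x in S, f x * w x ∂μ| ≤ K * ∫ x in S \ G, w x ∂μ + δ * ∫ x in S, w x ∂μ := by
  have hbound : ∀ᵐ x ∂μ.restrict S, ‖f x * w x‖ ≤ K * (S \ G).indicator w x + δ * w x := by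
    filter_upwards [ae_restrict_mem hS] with x hxS
    have hwx := hw0 x hxS
    rw [norm_mul, Real.norm_eq_abs, Real.norm_eq_abs, abs_of_nonneg hwx]
    by_cases hxG : x ∈ G
    · rw [indicator_of_notMem (fun hx => hx.2 hxG), mul_zero, zero_add]
      exact mul_le_mul_of_nonneg_right (hfδ x hxG) hwx
    · rw [indicator_of_mem (mem_sdiff_of_mem hxS hxG)]
      nlinarith [hfK x hxS]
  calc |∫ x in S, f x * w x ∂μ| ≤ ∫ x in S, (K * (S \ G).indicator w x + δ * w x) ∂μ :=
        norm_integral_le_of_norm_le (((hw.indicator (hS.diff hG)).const_mul K).add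
          (hw.const_mul δ)) hbound
    _ = K * ∫ x in S \ G, w x ∂μ + δ * ∫ x in S, w x ∂μ := by
        rw [integral_add ((hw.indicator (hS.diff hG)).const_mul K) (hw.const_mul δ),
          integral_const_mul, integral_const_mul, setIntegral_indicator (hS.diff hG),
          inter_eq_right.mpr sdiff_subset]

theorem tendsto_setIntegral_mul_of_concentrating {l : Filter ι} {S : Set α} {w : ι → α → ℝ}
    {f : α → ℝ} {L C : ℝ} (hS : MeasurableSet S) (hf : AEStronglyMeasurable f (μ.restrict S))
    (hfC : ∀ x ∈ S, |f x| ≤ C) (hw0 : ∀ᶠ i in l, ∀ x ∈ S, 0 ≤ w i x)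
    (hw : ∀ᶠ i in l, IntegrableOn (w i) S μ)
    (hmass : Tendsto (fun i => ∫ x in S, w i x ∂μ) l (𝓝 1))
    (hconc : ∀ δ > 0, ∃ G, MeasurableSet G ∧ (∀ x ∈ G, |f x - L| ≤ δ) ∧
      Tendsto (fun i => ∫ x in S \ G, w i x ∂μ) l (𝓝 0)) :
    Tendsto (fun i => ∫ x in S, f x * w i x ∂μ) l (𝓝 L) := by
  rw [Metric.tendsto_nhds]
  intro δ hδ
  obtain ⟨G, hG, hfG, hGmass⟩ := hconc (δ / 2) (by positivity)
  have herr : Tendsto (fun i => (C + |L|) * ∫ x in S \ G, w i x ∂μ +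
      δ / 2 * ∫ x in S, w i x ∂μ + |L| * |∫ x in S, w i x ∂μ - 1|) l (𝓝 (δ / 2)) := by
    convert ((hGmass.const_mul (C + |L|)).add (hmass.const_mul (δ / 2))).add
      ((hmass.sub_const 1).abs.const_mul |L|) using 2
    simp
  filter_upwards [hw0, hw, herr.eventually (gt_mem_nhds (by linarith : δ / 2 < δ))]
    with i hi0 hi hlt
  have hfw : Integrable (fun x => f x * w i x) (μ.restrict S) :=
    hi.bdd_mul hf ((ae_restrict_iff' hS).2 (Eventually.of_forall hfC))
  have hsplit : ∫ x in S, f x * w i x ∂μ - L =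
      ∫ x in S, (f x - L) * w i x ∂μ + L * (∫ x in S, w i x ∂μ - 1) := by
    simp_rw [sub_mul]
    rw [integral_sub hfw (hi.const_mul L), integral_const_mul]
    ring
  have hfL : ∀ x ∈ S, |f x - L| ≤ C + |L| := fun x hx =>
    (abs_sub _ _).trans (by linarith [hfC x hx])
  rw [Real.dist_eq, hsplit]
  calc _ ≤ |∫ x in S, (f x - L) * w i x ∂μ| + |L * (∫ x in S, w i x ∂μ - 1)| := abs_add_le _ _
    _ ≤ _ := by
        rw [abs_mul]
        gcongr
        exact abs_setIntegral_mul_le_of_abs_le hS hG (by positivity) hi0 hi hfL hfG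
    _ < δ := hlt

end Concentration

lemma integral_Ioi_add_rpow_of_lt {a c m : ℝ} (ha : a < -1) (hc : -m < c) :
    ∫ x in Ioi c, (x + m) ^ a = -(c + m) ^ (a + 1) / (a + 1) := by
  have h := (measurePreserving_add_right volume m).setIntegral_preimage_emb
    (measurableEmbedding_addRight m) (fun x => x ^ a) (Ioi (c + m))
  rw [preimage_add_const_Ioi, add_sub_cancel_right] at h
  rw [h, integral_Ioi_rpow_of_lt ha (by linarith)]

section SumWeight

variable {a : ℝ}

lemma integrableOn_Ici_add_rpow {x r : ℝ} (hr : r < -1) (hxa : 0 < x + a) :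
    IntegrableOn (fun y => (x + y) ^ r) (Ici a) := by
  simp_rw [add_comm x]
  exact (integrableOn_Ici_iff_integrableOn_Ioi).2 (integrableOn_add_rpow_Ioi_of_lt hr (by linarith))

lemma integral_Ici_add_rpow {x r : ℝ} (hr : r < -1) (hxa : 0 < x + a) :
    ∫ y in Ici a, (x + y) ^ r = -(x + a) ^ (r + 1) / (r + 1) := by
  simp_rw [add_comm x]
  rw [integral_Ici_eq_integral_Ioi, integral_Ioi_add_rpow_of_lt hr (by linarith)]

lemma integrableOn_Ici_prod_Ici_add_rpow {r : ℝ} (ha : 0 < a) (hr : r < -2) :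
    IntegrableOn (fun p : ℝ × ℝ => (p.1 + p.2) ^ r) (Ici a ×ˢ Ici a) := by
  have hmeas : Measurable (fun p : ℝ × ℝ => (p.1 + p.2) ^ r) := by fun_prop
  rw [IntegrableOn, Measure.volume_eq_prod, ← Measure.prod_restrict,
    integrable_prod_iff hmeas.aestronglyMeasurable]
  constructor
  · filter_upwards [ae_restrict_mem measurableSet_Ici] with x (hx : a ≤ x)
    exact integrableOn_Ici_add_rpow (by linarith) (by linarith)
  · have hint : IntegrableOn (fun x => -(a + x) ^ (r + 1) / (r + 1)) (Ici a) :=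
      (integrableOn_Ici_add_rpow (by linarith) (by linarith)).neg.div_const _
    refine hint.congr ?_
    filter_upwards [ae_restrict_mem measurableSet_Ici] with x (hx : a ≤ x)
    rw [setIntegral_congr_fun measurableSet_Ici fun y (hy : a ≤ y) =>
        Real.norm_of_nonneg (rpow_nonneg (by linarith) r),
      integral_Ici_add_rpow (by linarith) (by linarith), add_comm]

lemma setIntegral_Ici_prod_Ici_add_rpow {r : ℝ} (ha : 0 < a) (hr : r < -2) :
    ∫ p in Ici a ×ˢ Ici a, (p.1 + p.2) ^ r = (2 * a) ^ (r + 2) / ((r + 1) * (r + 2)) := by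
  have hint := integrableOn_Ici_prod_Ici_add_rpow ha hr
  rw [IntegrableOn, Measure.volume_eq_prod] at hint
  rw [Measure.volume_eq_prod, setIntegral_prod _ hint,
    setIntegral_congr_fun measurableSet_Ici fun x (hx : a ≤ x) =>
      integral_Ici_add_rpow (by linarith) (by linarith)]
  simp_rw [add_comm _ a]
  rw [integral_div, integral_neg, integral_Ici_add_rpow (by linarith) (by linarith), ← two_mul,
    add_assoc, one_add_one_eq_two]
  have h1 : r + 1 ≠ 0 := by linarith
  have h2 : r + 2 ≠ 0 := by linarith
  field_simp

lemma tendsto_setIntegral_Ici_prod_Ici_mul_add_rpow (ha : 0 < a) :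
    Tendsto (fun ε => ∫ p in Ici a ×ˢ Ici a, ε * (p.1 + p.2) ^ (-2 - ε)) (𝓝[>] 0) (𝓝 1) := by
  have hcont : Tendsto (fun ε : ℝ => (2 * a) ^ (-ε) / (1 + ε)) (𝓝[>] 0) (𝓝 1) := by
    have h : ContinuousAt (fun ε : ℝ => (2 * a) ^ (-ε) / (1 + ε)) 0 := by
      fun_prop (disch := positivity)
    simpa using h.tendsto.mono_left nhdsWithin_le_nhds
  refine hcont.congr' (eventually_nhdsWithin_of_forall fun ε (hε : 0 < ε) => ?_)
  dsimp only
  rw [integral_const_mul, setIntegral_Ici_prod_Ici_add_rpow ha (by linarith),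
    show -2 - ε + 2 = -ε by ring, show -2 - ε + 1 = -(1 + ε) by ring]
  field_simp

lemma tendsto_setIntegral_Ici_prod_Ici_sdiff_mul_add_rpow {b : ℝ} (ha : 0 < a) (hab : a ≤ b) :
    Tendsto (fun ε => ∫ p in Ici a ×ˢ Ici a \ Ici b ×ˢ Ici b, ε * (p.1 + p.2) ^ (-2 - ε))
      (𝓝[>] 0) (𝓝 0) := by
  have hsub : Ici b ×ˢ Ici b ⊆ Ici a ×ˢ Ici a :=
    prod_mono (Ici_subset_Ici.2 hab) (Ici_subset_Ici.2 hab)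
  refine (sub_self (1 : ℝ) ▸ (tendsto_setIntegral_Ici_prod_Ici_mul_add_rpow ha).sub
    (tendsto_setIntegral_Ici_prod_Ici_mul_add_rpow (ha.trans_le hab))).congr'
    (eventually_nhdsWithin_of_forall fun ε (hε : 0 < ε) => ?_)
  dsimp only
  rw [setIntegral_sdiff (measurableSet_Ici.prod measurableSet_Ici)
    ((integrableOn_Ici_prod_Ici_add_rpow ha (by linarith)).const_mul ε) hsub]

end SumWeight

/-- If h : [1,∞)² → ℝ is bounded measurable and h(t₁,t₂) → L as min(t₁,t₂) → ∞, then
lim_{ε→0⁺} ε · ∫_{[1,∞)²} h(t₁,t₂) (t₁+t₂)^{-2-ε} dt₁dt₂ = L. -/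
theorem stmt_5 (h : ℝ × ℝ → ℝ) (L : ℝ) (C : ℝ)
    (hmeas : Measurable h)
    (hbdd : ∀ p : ℝ × ℝ, 1 ≤ p.1 → 1 ≤ p.2 → |h p| ≤ C)
    (hlim : ∀ δ : ℝ, 0 < δ → ∃ T : ℝ, ∀ p : ℝ × ℝ,
      1 ≤ p.1 → 1 ≤ p.2 → T ≤ min p.1 p.2 → |h p - L| < δ) :
    Filter.Tendsto
      (fun ε : ℝ => ε * ∫ p in (Set.Ici (1:ℝ)) ×ˢ (Set.Ici (1:ℝ)),
        h p * (p.1 + p.2) ^ (-2 - ε))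
      (nhdsWithin 0 (Set.Ioi 0)) (nhds L) := by
  simp_rw [← integral_const_mul, mul_left_comm _ (h _)]
  refine tendsto_setIntegral_mul_of_concentrating (measurableSet_Ici.prod measurableSet_Ici)
    hmeas.aestronglyMeasurable (fun p hp => hbdd p hp.1 hp.2) ?_ ?_
    (tendsto_setIntegral_Ici_prod_Ici_mul_add_rpow one_pos) ?_
  · filter_upwards [self_mem_nhdsWithin] with ε (hε : 0 < ε) p (hp : 1 ≤ p.1 ∧ 1 ≤ p.2)
    exact mul_nonneg hε.le (rpow_nonneg (by linarith) _)
  · filter_upwards [self_mem_nhdsWithin] with ε (hε : 0 < ε)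
    exact (integrableOn_Ici_prod_Ici_add_rpow one_pos (by linarith)).const_mul ε
  · intro δ hδ
    obtain ⟨T, hT⟩ := hlim δ hδ
    refine ⟨Ici (max T 1) ×ˢ Ici (max T 1), measurableSet_Ici.prod measurableSet_Ici,
      fun p ⟨hp₁, hp₂⟩ => ?_, tendsto_setIntegral_Ici_prod_Ici_sdiff_mul_add_rpow one_pos
        (le_max_right T 1)⟩
    have hp₁ : max T 1 ≤ p.1 := hp₁
    have hp₂ : max T 1 ≤ p.2 := hp₂
    exact (hT p (le_of_max_le_right hp₁) (le_of_max_le_right hp₂)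
      (le_min (le_of_max_le_left hp₁) (le_of_max_le_left hp₂))).le
end
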